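/- Fix an integer d ≥ 3, u > 0, θ ∈ (−π/2, π/2) and φ₁, …, φ_{d−2} ∈ (−π/2, π/2). For R > 0 let v(R) ∈ ℝ^d be the vector (R sinθ cosφ_{d−2}⋯cosφ₂cosφ₁, R sinθ cosφ_{d−2}⋯cosφ₂ sinφ₁, R sinθ cosφ_{d−2}⋯cosφ₃ sinφ₂, …, R sinθ sinφ_{d−2}, R cosθ). Let x = (−u, 0, …, 0, −1) ∈ ℝ^d and let C̄ = {y ∈ ℝ^d : y₂² + ⋯ + y_d² = 1} be the infinite unit cylinder. Then R* = 2cosθ/(1 − sin²θ cos²φ_{d−2}⋯cos²φ₁) is the unique R > 0 such that x + v(R) ∈ C̄. -/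

import Mathlib

open Real Set

noncomputable section

/-- The direction vector `v(R)` of the reflected ray, in `ℝ^d` (coordinates indexed by
`Fin d`, zero-based): the first coordinate is `R sin θ cos φ_{d-2} ⋯ cos φ₁`, the
`m`-th coordinate (for `2 ≤ m ≤ d-1`, one-based) is
`R sin θ cos φ_{d-2} ⋯ cos φ_m sin φ_{m-1}`, and the last coordinate is `R cos θ`. -/
def rayVector (d : ℕ) (θ : ℝ) (φ : Fin (d - 2) → ℝ) (R : ℝ) :
    EuclideanSpace ℝ (Fin d) := WithLp.toLp 2 fun (i : Fin d) =>
  if h0 : (i : ℕ) = 0 then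
    R * Real.sin θ * ∏ j : Fin (d - 2), Real.cos (φ j)
  else if hlast : (i : ℕ) = d - 1 then
    R * Real.cos θ
  else
    R * Real.sin θ * Real.sin (φ ⟨(i : ℕ) - 1, by
        have h1 := i.isLt; omega⟩) *
      ∏ j ∈ Finset.univ.filter (fun j : Fin (d - 2) => (i : ℕ) ≤ (j : ℕ)),
        Real.cos (φ j)

/-- The starting point `x = (-u, 0, …, 0, -1) ∈ ℝ^d`. -/
def rayStart (d : ℕ) (u : ℝ) : EuclideanSpace ℝ (Fin d) := WithLp.toLp 2 fun (i : Fin d) =>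
  if (i : ℕ) = 0 then -u else if (i : ℕ) = d - 1 then -1 else 0

/-! The first coordinate of `x + v(R)` is not constrained, the last one is `R cos θ - 1`, and
the middle ones are those of `v(R)`; as `sin² φ_k = 1 - cos² φ_k`, their squares telescope to
`R² sin² θ (1 - ∏ cos² φ_j)`. With `sin² θ + cos² θ = 1` the cylinder equation becomes
`R (R (1 - sin² θ ∏ cos² φ_j) - 2 cos θ) = 0`, and the bracketed factor `1 - sin² θ ∏ cos² φ_j`
is at least `cos² θ > 0`. -/

theorem Finset.sum_one_sub_mul_prod_filter_lt {ι R : Type*} [CommRing R] [LinearOrder ι]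
    (s : Finset ι) (c : ι → R) :
    ∑ i ∈ s, (1 - c i) * ∏ j ∈ s with i < j, c j = 1 - ∏ i ∈ s, c i := by
  have h := Finset.prod_add_ordered s c (fun i => 1 - c i)
  simp only [add_sub_cancel, Finset.prod_const_one, mul_one] at h
  linear_combination -h

lemma cos_sq_le_one_sub_sin_sq_mul_prod_cos_sq {ι : Type*} (s : Finset ι) (θ : ℝ) (φ : ι → ℝ) :
    cos θ ^ 2 ≤ 1 - sin θ ^ 2 * ∏ j ∈ s, cos (φ j) ^ 2 := by
  have hP : ∏ j ∈ s, cos (φ j) ^ 2 ≤ 1 :=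
    Finset.prod_le_one (fun j _ => sq_nonneg _) fun j _ => cos_sq_le_one (φ j)
  nlinarith [sin_sq_add_cos_sq θ, sq_nonneg (sin θ)]

lemma Fin.sum_filter_pos_eq {M : Type*} [AddCommMonoid M] (n : ℕ) (f : Fin (n + 2) → M) :
    ∑ i ∈ Finset.univ.filter (fun i : Fin (n + 2) => 0 < (i : ℕ)), f i
      = ∑ k : Fin n, f k.castSucc.succ + f (Fin.last (n + 1)) := by
  rw [Finset.sum_filter, Fin.sum_univ_succ, Fin.sum_univ_castSucc]
  simp

lemma sq_mul_sin_sq_add_sq_eq_one_iff {R θ P : ℝ} (hR : R ≠ 0)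
    (hD : 1 - sin θ ^ 2 * P ≠ 0) :
    R ^ 2 * sin θ ^ 2 * (1 - P) + (R * cos θ - 1) ^ 2 = 1 ↔
      R = 2 * cos θ / (1 - sin θ ^ 2 * P) := by
  have key : R ^ 2 * sin θ ^ 2 * (1 - P) + (R * cos θ - 1) ^ 2 - 1
      = R * (R * (1 - sin θ ^ 2 * P) - 2 * cos θ) := by
    linear_combination R ^ 2 * sin_sq_add_cos_sq θ
  rw [← sub_eq_zero, key, mul_eq_zero, or_iff_right hR, sub_eq_zero, eq_div_iff hD]

section Coordinates

variable (n : ℕ) (θ : ℝ) (φ : Fin n → ℝ) (R : ℝ)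

lemma rayVector_last : rayVector (n + 2) θ φ R (Fin.last (n + 1)) = R * cos θ := by
  simp [rayVector]

lemma rayVector_succ_castSucc (k : Fin n) :
    rayVector (n + 2) θ φ R k.castSucc.succ
      = R * sin θ * sin (φ k) * ∏ j with k < j, cos (φ j) := by
  have h0 : ((k.castSucc.succ : Fin (n + 2)) : ℕ) ≠ 0 := by simp
  have hlast : ((k.castSucc.succ : Fin (n + 2)) : ℕ) ≠ n + 2 - 1 := by simp; omega
  rw [rayVector, PiLp.toLp_apply, dif_neg h0, dif_neg hlast]
  congr 2

lemma rayStart_last (u : ℝ) : rayStart (n + 2) u (Fin.last (n + 1)) = -1 := by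
  simp [rayStart]

lemma rayStart_succ_castSucc (u : ℝ) (k : Fin n) : rayStart (n + 2) u k.castSucc.succ = 0 := by
  simp [rayStart, k.isLt.ne]

lemma sum_sq_rayVector_succ_castSucc :
    ∑ k : Fin n, rayVector (n + 2) θ φ R k.castSucc.succ ^ 2
      = R ^ 2 * sin θ ^ 2 * (1 - ∏ j, cos (φ j) ^ 2) := by
  rw [← Finset.sum_one_sub_mul_prod_filter_lt, Finset.mul_sum]
  refine Finset.sum_congr rfl fun k _ => ?_
  rw [rayVector_succ_castSucc, ← sin_sq, Finset.prod_pow]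
  ring

lemma sum_sq_rayStart_add_rayVector (u : ℝ) :
    ∑ i ∈ Finset.univ.filter (fun i : Fin (n + 2) => 0 < (i : ℕ)),
        (rayStart (n + 2) u i + rayVector (n + 2) θ φ R i) ^ 2
      = R ^ 2 * sin θ ^ 2 * (1 - ∏ j, cos (φ j) ^ 2) + (R * cos θ - 1) ^ 2 := by
  simp only [Fin.sum_filter_pos_eq, rayStart_succ_castSucc, zero_add,
    sum_sq_rayVector_succ_castSucc, rayStart_last, rayVector_last]
  ring

end Coordinates

theorem exit_radius_unique_general (d : ℕ) (hd : 3 ≤ d) (u : ℝ)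
    (θ : ℝ) (hθ : θ ∈ Set.Ioo (-(π / 2)) (π / 2))
    (φ : Fin (d - 2) → ℝ)
    (Rstar : ℝ)
    (hRstar : Rstar = 2 * Real.cos θ /
      (1 - Real.sin θ ^ 2 * ∏ j : Fin (d - 2), Real.cos (φ j) ^ 2)) :
    0 < Rstar ∧
      ∀ R : ℝ, 0 < R →
        ((∑ i ∈ Finset.univ.filter (fun i : Fin d => 0 < (i : ℕ)),
            (rayStart d u i + rayVector d θ φ R i) ^ 2 = 1) ↔ R = Rstar) := by
  obtain ⟨n, rfl⟩ : ∃ n, d = n + 2 := ⟨d - 2, by omega⟩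
  set D := 1 - sin θ ^ 2 * ∏ j, cos (φ j) ^ 2
  have hcos : 0 < cos θ := cos_pos_of_mem_Ioo hθ
  have hD : 0 < D :=
    (pow_pos hcos 2).trans_le (cos_sq_le_one_sub_sin_sq_mul_prod_cos_sq _ θ φ)
  refine ⟨hRstar ▸ by positivity, fun R hR => ?_⟩
  rw [sum_sq_rayStart_add_rayVector, hRstar]
  exact sq_mul_sin_sq_add_sq_eq_one_iff hR.ne' hD.ne'

/-- Fix an integer `d ≥ 3`, `u > 0`, `θ ∈ (-π/2, π/2)` and
`φ₁, …, φ_{d-2} ∈ (-π/2, π/2)`.  Then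
`R* = 2 cos θ / (1 - sin² θ cos² φ_{d-2} ⋯ cos² φ₁)` is the unique `R > 0` such that
`x + v(R)` lies on the infinite unit cylinder `C̄ = {y : y₂² + ⋯ + y_d² = 1}`. -/
theorem exit_radius_unique (d : ℕ) (hd : 3 ≤ d) (u : ℝ) (hu : 0 < u)
    (θ : ℝ) (hθ : θ ∈ Set.Ioo (-(π / 2)) (π / 2))
    (φ : Fin (d - 2) → ℝ) (hφ : ∀ j, φ j ∈ Set.Ioo (-(π / 2)) (π / 2))
    (Rstar : ℝ)
    (hRstar : Rstar = 2 * Real.cos θ /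
      (1 - Real.sin θ ^ 2 * ∏ j : Fin (d - 2), Real.cos (φ j) ^ 2)) :
    0 < Rstar ∧
      ∀ R : ℝ, 0 < R →
        ((∑ i ∈ Finset.univ.filter (fun i : Fin d => 0 < (i : ℕ)),
            (rayStart d u i + rayVector d θ φ R i) ^ 2 = 1) ↔ R = Rstar) :=
  exit_radius_unique_general d hd u θ hθ φ Rstar hRstar
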